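/- arXiv:2301.03123 — 4 statements merged into one kernel-verified Lean document; each statement's English description precedes it below -/
import Mathlib

section
/- Let X be a finite partial order endowed with the upper-set (Alexandrov) topology, let C be a category with finite limits, and let F : X ⥤ C be a functor. Then the C-valued presheaf on the topological space X sending an open set U to the limit of F restricted to the (finite) subposet U, with restriction maps for V ⊆ U induced by the universal property of limits, is a sheaf. -/
/-!
STATEMENT 1: For a finite partial order `X` with the upper-set (Alexandrov) topology, a
category `C` with finite limits, and a functor `F : X ⥤ C`, the presheaf sending an open
set `U` to the limit of `F` restricted to the subposet `U` (with the canonical restriction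
maps) is a sheaf.
-/

open CategoryTheory CategoryTheory.Limits TopologicalSpace

universe u v

variable (X : Type) [PartialOrder X] [Finite X]

/-- The upper-set (Alexandrov) topology on a poset: open sets are exactly the upper sets. -/
def upperSetTopology : TopologicalSpace X where
  IsOpen U := IsUpperSet U
  isOpen_univ := isUpperSet_univ
  isOpen_inter _ _ h h' := h.inter h'
  isOpen_sUnion _ h := isUpperSet_sUnion h

/-- The poset `X` with the upper-set topology, as an object of `TopCat`. -/
def XTop : TopCat := @TopCat.of X (upperSetTopology X)

/-- The subposet underlying an open subset of `X`. -/
def sub (U : Opens (XTop X)) : Type := {x : X // x ∈ U.1}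

instance (U : Opens (XTop X)) : PartialOrder (sub X U) :=
  inferInstanceAs (PartialOrder {x : X // x ∈ U.1})

noncomputable instance (U : Opens (XTop X)) : Fintype (sub X U) := by
  have : Finite (sub X U) := inferInstanceAs (Finite {x : X // x ∈ U.1})
  exact Fintype.ofFinite (sub X U)

noncomputable instance (U : Opens (XTop X)) (a b : sub X U) : Fintype (a ⟶ b) := by
  have : Subsingleton (a ⟶ b) := ⟨fun ⟨⟨h1⟩⟩ ⟨⟨h2⟩⟩ => rfl⟩
  have : Finite (a ⟶ b) := Finite.of_subsingleton
  exact Fintype.ofFinite _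

noncomputable instance (U : Opens (XTop X)) : FinCategory (sub X U) where
  fintypeObj := inferInstance
  fintypeHom := inferInstance

variable (C : Type u) [Category.{v} C] [HasFiniteLimits C] (F : X ⥤ C)

/-- The restriction of `F : X ⥤ C` to the (finite) subposet underlying an open set `U`. -/
def diag (U : Opens (XTop X)) : sub X U ⥤ C :=
  (Monotone.functor (f := (Subtype.val : sub X U → X)) fun _ _ h => h) ⋙ F

/-- The `C`-valued presheaf on `X` (with the upper-set topology) sending an open set `U`
to the limit of `F` restricted to the subposet `U`, with restriction maps for `V ⊆ U`
induced by the universal property of limits. -/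
noncomputable def secPresheaf : TopCat.Presheaf C (XTop X) where
  obj U := limit (diag X C F U.unop)
  map {U V} i :=
    limit.lift (diag X C F V.unop)
      { pt := limit (diag X C F U.unop)
        π :=
          { app := fun x => limit.π (diag X C F U.unop) ⟨x.1, leOfHom i.unop x.2⟩
            naturality := fun x y f => by
              dsimp
              refine (Category.id_comp _).trans ?_
              exact (limit.w (diag X C F U.unop) (homOfLE (leOfHom f))).symm } }
  map_id U := by
    apply limit.hom_ext
    intro j
    simp
    rfl
  map_comp {U V W} i j := by
    apply limit.hom_ext
    intro k
    simp
    try rfl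
    first
      | exact (limit.lift_π (F := diag X C F V.unop) _ k).symm
      | (erw [limit.lift_π]; try rfl)

/-!
A morphism `E ⟶ lim_{x ∈ U} F x` is a family of morphisms `E ⟶ F x`, `x ∈ U`, compatible along
`≤`. So it suffices to glue morphisms: given `s i : E ⟶ lim_{U i} F` agreeing on overlaps, their
components at a point `x` do not depend on the chosen `U i ∋ x`, and the resulting family is
compatible along `≤` because every `U i` is an upper set. Uniqueness holds because a morphism into
the limit is determined by its components.
-/

lemma XTop.mem_of_le {P : Type} [PartialOrder P] (U : Opens (XTop P)) {x y : P} (h : x ≤ y)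
    (hx : x ∈ U) : y ∈ U :=
  U.2 h hx

namespace secPresheaf

variable {X C F}

-- Typed by `(secPresheaf X C F).obj` rather than `limit (diag X C F U)`, so that composites with
-- restriction maps reassociate syntactically.
noncomputable def π (U : Opens (XTop X)) (x : sub X U) :
    (secPresheaf X C F).obj (.op U) ⟶ F.obj x.1 :=
  limit.π (diag X C F U) x

lemma map_π {U V : (Opens (XTop X))ᵒᵖ} (i : U ⟶ V) (x : sub X V.unop) :
    (secPresheaf X C F).map i ≫ π V.unop x = π U.unop ⟨x.1, leOfHom i.unop x.2⟩ :=
  limit.lift_π _ _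

lemma π_comp_map {U : Opens (XTop X)} {x y : sub X U} (h : x.1 ≤ y.1) :
    π U x ≫ F.map (homOfLE h) = π (C := C) U y :=
  limit.w (diag X C F U) (homOfLE h : x ⟶ y)

variable {E : C}

lemma hom_ext {U : Opens (XTop X)} {s t : E ⟶ (secPresheaf X C F).obj (.op U)}
    (h : ∀ x, s ≫ π U x = t ≫ π U x) : s = t :=
  limit.hom_ext h

noncomputable def lift {U : Opens (XTop X)} (g : ∀ x : sub X U, E ⟶ F.obj x.1)
    (hg : ∀ x y (h : x.1 ≤ y.1), g x ≫ F.map (homOfLE h) = g y) :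
    E ⟶ (secPresheaf X C F).obj (.op U) :=
  limit.lift (diag X C F U)
    { pt := E
      π :=
        { app := g
          naturality := fun x y f => (Category.id_comp _).trans (hg x y (leOfHom f)).symm } }

lemma lift_π {U : Opens (XTop X)} (g : ∀ x : sub X U, E ⟶ F.obj x.1)
    (hg : ∀ x y (h : x.1 ≤ y.1), g x ≫ F.map (homOfLE h) = g y) (x : sub X U) :
    lift g hg ≫ π U x = g x :=
  limit.lift_π _ _

variable {ι : Type*} {U : ι → Opens (XTop X)}

lemma hom_ext_iSup {s t : E ⟶ (secPresheaf X C F).obj (.op (iSup U))}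
    (h : ∀ i, s ≫ (secPresheaf X C F).map (Opens.leSupr U i).op =
      t ≫ (secPresheaf X C F).map (Opens.leSupr U i).op) : s = t :=
  hom_ext fun x => by
    obtain ⟨i, hi⟩ := Opens.mem_iSup.mp x.2
    -- `rw [map_π]` does not fire here: membership in `sub X U` typechecks only after unfolding
    -- `XTop`, so instances of `map_π` are stated explicitly throughout.
    have hπ : (secPresheaf X C F).map (Opens.leSupr U i).op ≫ π (U i) ⟨x.1, hi⟩ = π (iSup U) x :=
      map_π _ _
    simpa only [Category.assoc, hπ] using h i =≫ π (U i) ⟨x.1, hi⟩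

variable {sf : ∀ i, E ⟶ (secPresheaf X C F).obj (.op (U i))}

lemma π_eq_of_compatible
    (hsf : ∀ i j, sf i ≫ (secPresheaf X C F).map ((U i).infLELeft (U j)).op =
      sf j ≫ (secPresheaf X C F).map ((U i).infLERight (U j)).op)
    (x : X) (i j : ι) (hi : x ∈ U i) (hj : x ∈ U j) :
    sf i ≫ π (U i) ⟨x, hi⟩ = sf j ≫ π (U j) ⟨x, hj⟩ := by
  have hl : (secPresheaf X C F).map ((U i).infLELeft (U j)).op ≫ π (U i ⊓ U j) ⟨x, hi, hj⟩ =
      π (U i) ⟨x, hi⟩ := map_π _ _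
  have hr : (secPresheaf X C F).map ((U i).infLERight (U j)).op ≫ π (U i ⊓ U j) ⟨x, hi, hj⟩ =
      π (U j) ⟨x, hj⟩ := map_π _ _
  simpa only [Category.assoc, hl, hr] using hsf i j =≫ π (U i ⊓ U j) ⟨x, hi, hj⟩

variable (hsf : ∀ (x : X) (i j : ι) (hi : x ∈ U i) (hj : x ∈ U j),
  sf i ≫ π (U i) ⟨x, hi⟩ = sf j ≫ π (U j) ⟨x, hj⟩)

noncomputable def glue : E ⟶ (secPresheaf X C F).obj (.op (iSup U)) :=
  lift (fun x => sf (Opens.mem_iSup.mp x.2).choose ≫ π _ ⟨x.1, (Opens.mem_iSup.mp x.2).choose_spec⟩)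
    fun x y h => by
      have hx := (Opens.mem_iSup.mp x.2).choose_spec
      have hπ := π_comp_map (C := C) (F := F) (x := ⟨x.1, hx⟩) (y := ⟨y.1, XTop.mem_of_le _ h hx⟩) h
      exact (Category.assoc _ _ _).trans ((_ ≫= hπ).trans (hsf _ _ _ _ _))

lemma glue_π (x : sub X (iSup U)) {i : ι} (hi : x.1 ∈ U i) :
    glue hsf ≫ π _ x = sf i ≫ π (U i) ⟨x.1, hi⟩ := by
  rw [glue, lift_π]
  exact hsf _ _ _ _ _

lemma glue_map (i : ι) : glue hsf ≫ (secPresheaf X C F).map (Opens.leSupr U i).op = sf i :=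
  hom_ext fun x => by
    have hπ : (secPresheaf X C F).map (Opens.leSupr U i).op ≫ π (U i) x =
        π (iSup U) ⟨x.1, (Opens.leSupr U i).le x.2⟩ := map_π _ _
    rw [Category.assoc, hπ]
    exact glue_π hsf _ x.2

end secPresheaf

open secPresheaf in
/-- The presheaf of sections of a diagram `F : X ⥤ C` is a sheaf for the upper-set
topology on `X`. -/
theorem secPresheaf_isSheaf : (secPresheaf X C F).IsSheaf := fun E => by
  rw [← isSheaf_iff_isSheaf_of_type]
  refine (TopCat.Presheaf.isSheaf_iff_isSheafUniqueGluing_types _).2 fun ι U sf hsf => ?_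
  have hagree := π_eq_of_compatible (sf := sf) hsf
  exact ⟨glue hagree, glue_map hagree,
    fun s hs => hom_ext_iSup fun i => (hs i).trans (glue_map hagree i).symm⟩
end

section
/- Let P be a finite partial order, (X, φ) a P-datum of finite posets with cylinder Cyl(X), and Y any partial order. Let T be the set of families (f_p)_{p ∈ P} of monotone maps f_p : X p → Y satisfying f_p(φ_{p q}(y)) ≤ f_q(y) for all p ≤ q in P and all y ∈ X q, partially ordered by (f_p) ≤ (g_p) iff f_p(x) ≤ g_p(x) for all p and all x ∈ X p. Then the map sending a monotone map f : Cyl(X) → Y to the family (x ↦ f(p,x))_{p ∈ P} is an order isomorphism from the set of monotone maps Cyl(X) → Y, with the pointwise order, onto T. (This exhibits Cyl(X) as the lax colimit of the datum in the 2-category of posets.) -/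
/-!
STATEMENT 3: For a `P`-datum of finite posets `(X, φ)` with cylinder `Cyl(X)` and any
poset `Y`, the map sending a monotone map `f : Cyl(X) → Y` to the family
`(x ↦ f (p, x))_{p ∈ P}` is an order isomorphism from the poset of monotone maps
`Cyl(X) → Y` (pointwise order) onto the poset `T` of lax-compatible families, i.e.
`Cyl(X)` is the lax colimit of the datum in the 2-category of posets.
-/

open CategoryTheory

/-- A `P`-datum of (finite) posets. -/
structure PosetDatum (P : Type) [PartialOrder P] (X : P → Type) [∀ p, PartialOrder (X p)] where
  φ : ∀ {p q : P}, p ≤ q → X q →o X p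
  φ_refl : ∀ (p : P) (x : X p), φ (le_refl p) x = x
  φ_trans : ∀ {p q r : P} (hpq : p ≤ q) (hqr : q ≤ r) (z : X r),
      φ (hpq.trans hqr) z = φ hpq (φ hqr z)

variable {P : Type} [PartialOrder P] {X : P → Type} [∀ p, PartialOrder (X p)]

/-- The cylinder of a `P`-datum of posets, as a type. -/
def Cylinder (_D : PosetDatum P X) : Type := Σ p, X p

/-- The point of the cylinder determined by `p : P` and `x : X p`. -/
def Cylinder.mk (D : PosetDatum P X) (p : P) (x : X p) : Cylinder D := Sigma.mk p x

/-- The cylinder partial order: `(p, x) ≤ (q, y)` iff `p ≤ q` and `x ≤ φ_{p q} y`. -/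
instance (D : PosetDatum P X) : PartialOrder (Cylinder D) where
  le a b := ∃ h : Sigma.fst a ≤ Sigma.fst b, Sigma.snd a ≤ D.φ h (Sigma.snd b)
  le_refl a := ⟨le_refl _, by rw [D.φ_refl]⟩
  le_trans a b c := by
    rintro ⟨h1, hx1⟩ ⟨h2, hx2⟩
    exact ⟨h1.trans h2, by
      rw [D.φ_trans h1 h2]
      exact hx1.trans ((D.φ h1).monotone hx2)⟩
  le_antisymm a b := by
    obtain ⟨p, x⟩ := a
    obtain ⟨q, y⟩ := b
    rintro ⟨h1, hx1⟩ ⟨h2, hx2⟩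
    obtain rfl : p = q := le_antisymm h1 h2
    obtain rfl : x = y :=
      le_antisymm (hx1.trans_eq (D.φ_refl p y)) (hx2.trans_eq (D.φ_refl p x))
    rfl

theorem cylinder_is_lax_colimit_of_posets
    (hP : Finite P) (hX : ∀ p, Finite (X p)) (D : PosetDatum P X)
    (Y : Type) [PartialOrder Y] :
    ∃ e : (Cylinder D →o Y) ≃o
        {f : ∀ p, X p →o Y // ∀ {p q : P} (h : p ≤ q) (y : X q), f p (D.φ h y) ≤ f q y},
      ∀ (g : Cylinder D →o Y) (p : P) (x : X p), (e g).1 p x = g (Cylinder.mk D p x) := by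
  refine ⟨{
    toFun := fun g => ⟨fun p =>
      ⟨fun x => g ⟨p, x⟩, fun x y hxy => g.monotone ⟨le_refl p, by rw [D.φ_refl]; exact hxy⟩⟩,
      fun {p q} h y => g.monotone ⟨h, le_refl _⟩⟩
    invFun := fun f => ⟨fun a => f.1 a.1 a.2, by
      rintro ⟨p, x⟩ ⟨q, y⟩ ⟨h, hx⟩
      exact ((f.1 p).monotone hx).trans (f.2 h y)⟩
    left_inv := fun g => rfl
    right_inv := fun f => rfl
    map_rel_iff' := by
      intro g g'
      constructor
      · intro h ⟨p, x⟩
        exact h p x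
      · intro h p x
        exact h ⟨p, x⟩ }, fun g p x => rfl⟩
end

section
/- Let P be a finite partial order, C a category, (X, φ, F, ψ) a C-structured P-datum with cylinder Cyl(X), and let Y be a finite partial order with a functor G : Y ⥤ C. Then restriction along the slice inclusions x ↦ (p,x) defines a bijection between: (A) pairs (f, η) where f : Cyl(X) → Y is monotone and η assigns to each (p,x) ∈ Cyl(X) a morphism η_{(p,x)} : G(f(p,x)) → F p(x) in C such that for every relation (p,x) ≤ (q,y) in Cyl(X) the cylinder structure map F p(x) → F q(y) composed with η_{(p,x)} equals η_{(q,y)} composed with G(f(p,x) ≤ f(q,y)); and (B) families ((f_p, η_p))_{p ∈ P} where f_p : X p → Y is monotone and η_p assigns to each x ∈ X p a morphism (η_p)_x : G(f_p(x)) → F p(x) satisfying F p(x ≤ x') ∘ (η_p)_x = (η_p)_{x'} ∘ G(f_p(x) ≤ f_p(x')) for all x ≤ x' in X p, subject to the lax compatibility conditions: for all p ≤ q in P and y ∈ X q, f_p(φ_{p q}(y)) ≤ f_q(y) in Y and (ψ_{p q})_y ∘ (η_p)_{φ_{p q}(y)} = (η_q)_y ∘ G(f_p(φ_{p q}(y))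 ≤ f_q(y)). (This is the universal property exhibiting the cylinder as the poset-indexed lax colimit in the category of C-data.) -/
/-!
STATEMENT 4: the universal property of the cylinder of a `C`-structured `P`-datum as the
poset-indexed lax colimit in the category of `C`-data: restriction along the slice
inclusions `x ↦ (p, x)` is a bijection between pairs `(f, η)` on the cylinder and
lax-compatible families `((f_p, η_p))_{p ∈ P}`.
-/

open CategoryTheory

universe u v

variable {P : Type} [PartialOrder P] {X : P → Type} [∀ p, PartialOrder (X p)]

theorem Cylinder.mk_le_mk {D : PosetDatum P X} {p q : P} {x : X p} {y : X q}
    (h1 : p ≤ q) (h2 : x ≤ D.φ h1 y) : Cylinder.mk D p x ≤ Cylinder.mk D q y :=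
  ⟨h1, h2⟩

/-- A `C`-structure on a `P`-datum of posets. -/
structure CStruct (D : PosetDatum P X) (C : Type u) [Category.{v} C] (F : ∀ p, X p ⥤ C) where
  ψ : ∀ {p q : P} (h : p ≤ q) (y : X q), (F p).obj (D.φ h y) ⟶ (F q).obj y
  ψ_natural : ∀ {p q : P} (h : p ≤ q) {y y' : X q} (hy : y ≤ y'),
      (F p).map (homOfLE ((D.φ h).monotone hy)) ≫ ψ h y' = ψ h y ≫ (F q).map (homOfLE hy)
  ψ_refl : ∀ (p : P) (y : X p),
      ψ (le_refl p) y = eqToHom (congrArg (F p).obj (D.φ_refl p y))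
  ψ_trans : ∀ {p q r : P} (hpq : p ≤ q) (hqr : q ≤ r) (z : X r),
      ψ (hpq.trans hqr) z =
        eqToHom (congrArg (F p).obj (D.φ_trans hpq hqr z)) ≫ ψ hpq (D.φ hqr z) ≫ ψ hqr z

/-- The cylinder structure map attached to a relation `(p, x) ≤ (q, y)` of the cylinder. -/
def cylMap {D : PosetDatum P X} {C : Type u} [Category.{v} C] {F : ∀ p, X p ⥤ C}
    (S : CStruct D C F) {p q : P} {x : X p} {y : X q} (h1 : p ≤ q) (h2 : x ≤ D.φ h1 y) :
    (F p).obj x ⟶ (F q).obj y :=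
  (F p).map (homOfLE h2) ≫ S.ψ h1 y

section

variable (D : PosetDatum P X) {C : Type u} [Category.{v} C] (F : ∀ p, X p ⥤ C)
  (Y : Type) [PartialOrder Y] (G : Y ⥤ C)

/-- The raw data of side (A): a monotone map `f` on the cylinder together with morphisms
`η_{(p,x)} : G (f (p, x)) ⟶ F p (x)`. -/
structure RawA where
  f : Cylinder D →o Y
  η : ∀ (p : P) (x : X p), G.obj (f (Cylinder.mk D p x)) ⟶ (F p).obj x

/-- The raw data of side (B): monotone maps `f_p : X p → Y` together with morphisms
`(η_p)_x : G (f_p x) ⟶ F p (x)`. -/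
structure RawB where
  f : ∀ p : P, X p →o Y
  η : ∀ (p : P) (x : X p), G.obj (f p x) ⟶ (F p).obj x

variable {D F Y G}

/-- Condition on side (A): compatibility of `η` with the cylinder structure maps. -/
def CondA (S : CStruct D C F) (a : RawA D F Y G) : Prop :=
  ∀ {p q : P} {x : X p} {y : X q} (h1 : p ≤ q) (h2 : x ≤ D.φ h1 y),
    a.η p x ≫ cylMap S h1 h2 =
      G.map (homOfLE (a.f.monotone (Cylinder.mk_le_mk h1 h2))) ≫ a.η q y

/-- Condition on side (B): naturality of each `η_p` together with the lax compatibility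
conditions over `p ≤ q`. -/
def CondB (S : CStruct D C F) (b : RawB F Y G) : Prop :=
  (∀ (p : P) {x x' : X p} (h : x ≤ x'),
      b.η p x ≫ (F p).map (homOfLE h) =
        G.map (homOfLE ((b.f p).monotone h)) ≫ b.η p x') ∧
  (∀ {p q : P} (h : p ≤ q) (y : X q), b.f p (D.φ h y) ≤ b.f q y) ∧
  (∀ {p q : P} (h : p ≤ q) (y : X q) (hf : b.f p (D.φ h y) ≤ b.f q y),
      b.η p (D.φ h y) ≫ S.ψ h y = G.map (homOfLE hf) ≫ b.η q y)

/-- Restriction along the slice inclusions `x ↦ (p, x)`. -/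
def restrictRaw (a : RawA D F Y G) : RawB F Y G where
  f p := ⟨fun x => a.f (Cylinder.mk D p x), fun x x' h =>
    a.f.monotone (Cylinder.mk_le_mk (le_refl p) (by rw [D.φ_refl]; exact h))⟩
  η p x := a.η p x

theorem cylMap_of_le_refl (S : CStruct D C F) {p : P} {x y : X p}
    (h : x ≤ D.φ (le_refl p) y) :
    cylMap S (le_refl p) h = (F p).map (homOfLE (h.trans_eq (D.φ_refl p y))) := by
  rw [cylMap, S.ψ_refl, ← eqToHom_map (F p) (D.φ_refl p y), ← (F p).map_comp]
  rfl

theorem cylMap_le_refl (S : CStruct D C F) {p q : P} (h : p ≤ q) (y : X q) :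
    cylMap S h (le_refl (D.φ h y)) = S.ψ h y := by
  simp [cylMap]

theorem condB_restrictRaw (S : CStruct D C F) {a : RawA D F Y G} (ha : CondA S a) :
    CondB S (restrictRaw a) := by
  refine ⟨fun p x x' h => ?_, fun h y => a.f.monotone (Cylinder.mk_le_mk h le_rfl),
    fun h y _ => ?_⟩
  · have := ha (le_refl p) (h.trans_eq (D.φ_refl p x').symm)
    rwa [cylMap_of_le_refl] at this
  · have := ha h (le_refl (D.φ h y))
    rwa [cylMap_le_refl] at this

/-- The lax compatibility `f_p (φ_{pq} y) ≤ f_q y` is exactly what makes the glued map monotone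
on the cylinder. -/
def extendRaw (S : CStruct D C F) (b : RawB F Y G) (hb : CondB S b) : RawA D F Y G where
  f := ⟨fun a => b.f a.1 a.2, fun a c hac =>
    ((b.f a.1).monotone hac.2).trans (hb.2.1 hac.1 c.2)⟩
  η p x := b.η p x

/- Every relation `(p, x) ≤ (q, y)` factors as `(p, x) ≤ (p, φ_{pq} y) ≤ (q, y)`, so the cylinder
condition splits into naturality of `η_p` followed by the `ψ`-compatibility. -/
theorem condA_extendRaw (S : CStruct D C F) {b : RawB F Y G} (hb : CondB S b) :
    CondA S (extendRaw S b hb) := by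
  obtain ⟨hnat, hle, hψ⟩ := hb
  intro p q x y h1 h2
  change b.η p x ≫ (F p).map (homOfLE h2) ≫ S.ψ h1 y = _
  rw [reassoc_of% hnat p h2, hψ h1 y (hle h1 y), ← G.map_comp_assoc]
  rfl

theorem cylinder_universal_property_general
    (S : CStruct D C F) :
    ∃ e : {a : RawA D F Y G // CondA S a} ≃ {b : RawB F Y G // CondB S b},
      ∀ a : {a : RawA D F Y G // CondA S a}, (e a).1 = restrictRaw a.1 :=
  ⟨{ toFun := fun a => ⟨restrictRaw a.1, condB_restrictRaw S a.2⟩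
     invFun := fun b => ⟨extendRaw S b.1 b.2, condA_extendRaw S b.2⟩
     left_inv := fun _ => rfl
     right_inv := fun _ => rfl }, fun _ => rfl⟩

theorem cylinder_universal_property
    (hP : Finite P) (hX : ∀ p, Finite (X p)) (hY : Finite Y) (S : CStruct D C F) :
    ∃ e : {a : RawA D F Y G // CondA S a} ≃ {b : RawB F Y G // CondB S b},
      ∀ a : {a : RawA D F Y G // CondA S a}, (e a).1 = restrictRaw a.1 :=
  cylinder_universal_property_general S

end
end

section
/- Let X be a schematic space with structure functor 𝒪. For all t, x, y ∈ X with t ≤ x and t ≤ y, set S = {z : x ≤ z and y ≤ z}. Then the canonical ring homomorphism 𝒪(x) ⊗_{𝒪(t)} 𝒪(y) → ∏_{z ∈ S} 𝒪(z), a ⊗ b ↦ (r_{x z}(a) · r_{y z}(b))_{z}, is injective and its image is exactly the subring of compatible families {s ∈ ∏_{z ∈ S} 𝒪(z) : r_{z z'}(s_z) = s_{z'} for all z ≤ z' in S}; equivalently, the induced ring homomorphism from 𝒪(x) ⊗_{𝒪(t)} 𝒪(y) onto the limit of 𝒪 restricted to the subposet S = U_x ∩ U_y is bijective. -/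
/-!
Injectivity is faithful flatness of `A = 𝒪(x) ⊗_{𝒪(t)} 𝒪(y) → P = ∏_{z ∈ S} 𝒪(z)`.
For the image, faithfully flat descent identifies the image of `A` with the equalizer of the
two maps `P ⇉ P ⊗_A P`. As `S` is finite, `s ⊗ 1 = 1 ⊗ s` may be checked on the summands
`𝒪(z) ⊗_A 𝒪(z')` of `P ⊗_A P`, which receive `𝒪(z) ⊗_{𝒪(x)} 𝒪(z')`. There
`s_z ⊗ 1 = 1 ⊗ s_{z'}` already holds: schematicity at `x ≤ z, x ≤ z'` embeds
`𝒪(z) ⊗_{𝒪(x)} 𝒪(z')` into `∏_{w ≥ z, z'} 𝒪(w)`, where both sides become `s_w` for a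
compatible family `s`.
-/

open CategoryTheory TensorProduct

universe u

variable {X : Type u} [PartialOrder X] (𝒪 : X ⥤ CommRingCat.{u})

/-- The subposet `S = U_x ∩ U_y` of common upper bounds of `x` and `y`. -/
def Sxy (x y : X) : Type u := {z : X // x ≤ z ∧ y ≤ z}

/-- The canonical ring homomorphism `𝒪(x) ⊗_{𝒪(t)} 𝒪(y) → ∏_{z ∈ S} 𝒪(z)`,
`a ⊗ b ↦ (r_{x z}(a) · r_{y z}(b))_z`. -/
noncomputable def canMap {t x y : X} (htx : t ≤ x) (hty : t ≤ y) :
    letI : Algebra (𝒪.obj t) (𝒪.obj x) := (𝒪.map (homOfLE htx)).hom.toAlgebra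
    letI : Algebra (𝒪.obj t) (𝒪.obj y) := (𝒪.map (homOfLE hty)).hom.toAlgebra
    TensorProduct (𝒪.obj t) (𝒪.obj x) (𝒪.obj y) →+* ((z : Sxy x y) → 𝒪.obj z.1) := by
  letI : Algebra (𝒪.obj t) (𝒪.obj x) := (𝒪.map (homOfLE htx)).hom.toAlgebra
  letI : Algebra (𝒪.obj t) (𝒪.obj y) := (𝒪.map (homOfLE hty)).hom.toAlgebra
  letI : ∀ z : Sxy x y, Algebra (𝒪.obj t) (𝒪.obj z.1) :=
    fun z => (𝒪.map (homOfLE (htx.trans z.2.1))).hom.toAlgebra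
  refine (Algebra.TensorProduct.productMap ?_ ?_).toRingHom
  · exact
    { toRingHom := Pi.ringHom fun z => (𝒪.map (homOfLE z.2.1)).hom
      commutes' := fun a => by
        funext z
        show (𝒪.map (homOfLE z.2.1)) ((𝒪.map (homOfLE htx)) a) =
          (𝒪.map (homOfLE (htx.trans z.2.1))) a
        rw [← comp_apply, ← 𝒪.map_comp]
        rfl }
  · exact
    { toRingHom := Pi.ringHom fun z => (𝒪.map (homOfLE z.2.2)).hom
      commutes' := fun a => by
        funext z
        show (𝒪.map (homOfLE z.2.2)) ((𝒪.map (homOfLE hty)) a) =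
          (𝒪.map (homOfLE (htx.trans z.2.1))) a
        rw [← comp_apply, ← 𝒪.map_comp]
        rfl }

section PiDescent

variable {ι A : Type*} [CommRing A] {P : ι → Type*} [∀ i, CommRing (P i)] [Algebra A (∀ i, P i)]
  [DecidableEq ι]

theorem Pi.single_tmul_single_congr {R : Type*} [CommRing R] (φ : R →+* A) {i j : ι}
    [Algebra R (P i)] [Algebra R (P j)]
    (hi : ∀ (c : R) (a : P i), φ c • (Pi.single i a : ∀ k, P k) = Pi.single i (c • a))
    (hj : ∀ (c : R) (b : P j), φ c • (Pi.single j b : ∀ k, P k) = Pi.single j (c • b))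
    {a a' : P i} {b b' : P j} (h : a ⊗ₜ[R] b = a' ⊗ₜ[R] b') :
    (Pi.single i a : ∀ k, P k) ⊗ₜ[A] (Pi.single j b : ∀ k, P k) =
      (Pi.single i a' : ∀ k, P k) ⊗ₜ[A] (Pi.single j b' : ∀ k, P k) := by
  let f : (∀ k, P k) →+ (∀ k, P k) →+ (∀ k, P k) ⊗[A] (∀ k, P k) :=
    LinearMap.toAddMonoidHom'.comp (TensorProduct.mk A _ _).toAddMonoidHom
  let B := (f.compl₂ (AddMonoidHom.single P j)).comp (AddMonoidHom.single P i)
  have hB : ∀ (c : R) a b, B (c • a) b = B a (c • b) := fun c a b => by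
    show Pi.single i (c • a) ⊗ₜ[A] Pi.single j b = Pi.single i a ⊗ₜ[A] Pi.single j (c • b)
    rw [← hi, ← hj, smul_tmul]
  exact congrArg (liftAddHom B hB) h

theorem Pi.mem_range_algebraMap_of_single_tmul_single [Finite ι]
    [Module.FaithfullyFlat A (∀ i, P i)] (s : ∀ i, P i)
    (h : ∀ i j, (Pi.single i (s i) : ∀ k, P k) ⊗ₜ[A] (Pi.single j 1 : ∀ k, P k) =
      (Pi.single i 1 : ∀ k, P k) ⊗ₜ[A] (Pi.single j (s j) : ∀ k, P k)) :
    s ∈ Set.range (algebraMap A (∀ i, P i)) := by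
  cases nonempty_fintype ι
  rw [← (Algebra.IsEffective.of_faithfullyFlat A (∀ i, P i)).eqLocus_includeLeft_includeRight]
  show s ⊗ₜ[A] 1 = 1 ⊗ₜ[A] s
  rw [← Finset.univ_sum_single s, ← Finset.univ_sum_single (1 : ∀ i, P i)]
  simp only [sum_tmul, tmul_sum, Pi.one_apply]
  exact Finset.sum_congr rfl fun i _ => Finset.sum_congr rfl fun j _ => h j i

end PiDescent

section Schematic

def CanMapFaithfullyFlat : Prop :=
  ∀ {t x y : X} (htx : t ≤ x) (hty : t ≤ y),
    letI : Algebra (𝒪.obj t) (𝒪.obj x) := (𝒪.map (homOfLE htx)).hom.toAlgebra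
    letI : Algebra (𝒪.obj t) (𝒪.obj y) := (𝒪.map (homOfLE hty)).hom.toAlgebra
    letI := (canMap 𝒪 htx hty).toAlgebra
    Module.FaithfullyFlat (TensorProduct (𝒪.obj t) (𝒪.obj x) (𝒪.obj y))
      ((z : Sxy x y) → 𝒪.obj z.1)

def compatibleFamilies (x y : X) : Set ((z : Sxy x y) → 𝒪.obj z.1) :=
  {s | ∀ (z z' : Sxy x y) (hzz' : z.1 ≤ z'.1), (𝒪.map (homOfLE hzz')) (s z) = s z'}

instance Sxy.finite [Finite X] (x y : X) : Finite (Sxy x y) :=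
  inferInstanceAs (Finite {z : X // x ≤ z ∧ y ≤ z})

variable {𝒪}

lemma map_homOfLE_map_homOfLE {a b c : X} (hab : a ≤ b) (hbc : b ≤ c) (r : 𝒪.obj a) :
    𝒪.map (homOfLE hbc) (𝒪.map (homOfLE hab) r) = 𝒪.map (homOfLE (hab.trans hbc)) r := by
  rw [← comp_apply, ← 𝒪.map_comp]
  rfl

variable {t x y : X} (htx : t ≤ x) (hty : t ≤ y)

lemma canMap_tmul (a : 𝒪.obj x) (b : 𝒪.obj y) (z : Sxy x y) :
    letI : Algebra (𝒪.obj t) (𝒪.obj x) := (𝒪.map (homOfLE htx)).hom.toAlgebra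
    letI : Algebra (𝒪.obj t) (𝒪.obj y) := (𝒪.map (homOfLE hty)).hom.toAlgebra
    canMap 𝒪 htx hty (a ⊗ₜ b) z = 𝒪.map (homOfLE z.2.1) a * 𝒪.map (homOfLE z.2.2) b :=
  rfl

lemma canMap_tmul_one_mul_single [DecidableEq (Sxy x y)] (c : 𝒪.obj x) (z : Sxy x y)
    (a : 𝒪.obj z.1) :
    letI : Algebra (𝒪.obj t) (𝒪.obj x) := (𝒪.map (homOfLE htx)).hom.toAlgebra
    letI : Algebra (𝒪.obj t) (𝒪.obj y) := (𝒪.map (homOfLE hty)).hom.toAlgebra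
    canMap 𝒪 htx hty (c ⊗ₜ 1) * Pi.single z a = Pi.single z (𝒪.map (homOfLE z.2.1) c * a) := by
  rw [← Pi.single_mul_right, canMap_tmul, map_one, mul_one]

lemma canMap_injective (hff : CanMapFaithfullyFlat 𝒪) :
    Function.Injective (canMap 𝒪 htx hty) := by
  let : Algebra (𝒪.obj t) (𝒪.obj x) := (𝒪.map (homOfLE htx)).hom.toAlgebra
  let : Algebra (𝒪.obj t) (𝒪.obj y) := (𝒪.map (homOfLE hty)).hom.toAlgebra
  let := (canMap 𝒪 htx hty).toAlgebra
  have := hff htx hty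
  exact FaithfulSMul.algebraMap_injective _ _

lemma range_canMap_subset : Set.range (canMap 𝒪 htx hty) ⊆ compatibleFamilies 𝒪 x y := by
  let : Algebra (𝒪.obj t) (𝒪.obj x) := (𝒪.map (homOfLE htx)).hom.toAlgebra
  let : Algebra (𝒪.obj t) (𝒪.obj y) := (𝒪.map (homOfLE hty)).hom.toAlgebra
  rintro _ ⟨u, rfl⟩ z z' hzz'
  induction u using TensorProduct.induction_on with
  | zero => simp
  | tmul a b =>
    rw [canMap_tmul, canMap_tmul, map_mul, map_homOfLE_map_homOfLE, map_homOfLE_map_homOfLE]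
  | add u v hu hv => rw [map_add, Pi.add_apply, Pi.add_apply, map_add, hu, hv]

lemma tmul_one_eq_one_tmul_of_mem_compatibleFamilies (hff : CanMapFaithfullyFlat 𝒪)
    {s : (z : Sxy x y) → 𝒪.obj z.1} (hs : s ∈ compatibleFamilies 𝒪 x y) (z z' : Sxy x y) :
    letI : Algebra (𝒪.obj x) (𝒪.obj z.1) := (𝒪.map (homOfLE z.2.1)).hom.toAlgebra
    letI : Algebra (𝒪.obj x) (𝒪.obj z'.1) := (𝒪.map (homOfLE z'.2.1)).hom.toAlgebra
    s z ⊗ₜ[𝒪.obj x] (1 : 𝒪.obj z'.1) = (1 : 𝒪.obj z.1) ⊗ₜ[𝒪.obj x] s z' := by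
  apply canMap_injective z.2.1 z'.2.1 hff
  funext w
  rw [canMap_tmul, canMap_tmul, map_one, map_one, mul_one, one_mul]
  let w' : Sxy x y := ⟨w.1, z.2.1.trans w.2.1, z.2.2.trans w.2.1⟩
  exact (hs z w' w.2.1).trans (hs z' w' w.2.2).symm

lemma compatibleFamilies_subset_range [Finite X] (hff : CanMapFaithfullyFlat 𝒪) :
    compatibleFamilies 𝒪 x y ⊆ Set.range (canMap 𝒪 htx hty) := by
  classical
  let : Algebra (𝒪.obj t) (𝒪.obj x) := (𝒪.map (homOfLE htx)).hom.toAlgebra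
  let : Algebra (𝒪.obj t) (𝒪.obj y) := (𝒪.map (homOfLE hty)).hom.toAlgebra
  let := (canMap 𝒪 htx hty).toAlgebra
  have := hff htx hty
  intro s hs
  refine Pi.mem_range_algebraMap_of_single_tmul_single s fun z z' => ?_
  let : Algebra (𝒪.obj x) (𝒪.obj z.1) := (𝒪.map (homOfLE z.2.1)).hom.toAlgebra
  let : Algebra (𝒪.obj x) (𝒪.obj z'.1) := (𝒪.map (homOfLE z'.2.1)).hom.toAlgebra
  exact Pi.single_tmul_single_congr Algebra.TensorProduct.includeLeftRingHom
    (canMap_tmul_one_mul_single htx hty · z) (canMap_tmul_one_mul_single htx hty · z')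
    (tmul_one_eq_one_tmul_of_mem_compatibleFamilies hff hs z z')

end Schematic

theorem schematic_tensor_eq_sections
    [Finite X]
    -- schematicity (ii): the canonical maps to the products are faithfully flat
    (ff : ∀ {t x y : X} (htx : t ≤ x) (hty : t ≤ y),
      letI : Algebra (𝒪.obj t) (𝒪.obj x) := (𝒪.map (homOfLE htx)).hom.toAlgebra
      letI : Algebra (𝒪.obj t) (𝒪.obj y) := (𝒪.map (homOfLE hty)).hom.toAlgebra
      letI := (canMap 𝒪 htx hty).toAlgebra
      Module.FaithfullyFlat (TensorProduct (𝒪.obj t) (𝒪.obj x) (𝒪.obj y))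
        ((z : Sxy x y) → 𝒪.obj z.1))
    {t x y : X} (htx : t ≤ x) (hty : t ≤ y) :
    Function.Injective (canMap 𝒪 htx hty) ∧
      Set.range (canMap 𝒪 htx hty) =
        {s : (z : Sxy x y) → 𝒪.obj z.1 |
          ∀ (z z' : Sxy x y) (hzz' : z.1 ≤ z'.1), (𝒪.map (homOfLE hzz')) (s z) = s z'} :=
  ⟨canMap_injective htx hty ff,
    (range_canMap_subset htx hty).antisymm (compatibleFamilies_subset_range htx hty ff)⟩
end
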